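/- Every real number a with 0 ≤ a < 1 is an adherent point of the set of all ratios o(G)/o(H), where G ranges over all finite nilpotent groups and H ranges over all subgroups of G. That is, for every a ∈ [0, 1) and every ε > 0, there exist a finite nilpotent group G and a subgroup H of G such that |o(G)/o(H) - a| < ε. -/

import Mathlib

open Filter Topology

/-- The average order of the elements of a finite group `G`:
`o(G) = (1/|G|) * ∑_{x ∈ G} |x|`. -/
noncomputable def avgOrder (G : Type*) [Group G] : ℝ :=
  (∑ᶠ x : G, (orderOf x : ℝ)) / (Nat.card G)

/-!
In a group of exponent dividing `p²` the average order is determined by the number of elements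
of order `p²`. For the wreath product `W = C_p ≀ C_p` these are the `(v, c)` with `c ≠ 0` and
`∑ v ≠ 0`, so comparing `W` with a cyclic subgroup of order `p²` gives a ratio `ρ(p)` with
`1 - 3/p ≤ ρ(p) ≤ 1 - 1/(2p)`. Average orders are multiplicative over direct products of groups
of coprime orders, so every product of `ρ(p)` over a finite set of primes is a ratio `o(G)/o(H)`
with `G` a direct product of `p`-groups, hence nilpotent. Since `∑ 1/p` diverges while `ρ(p) → 1`,
multiplying the factors `ρ(p)` of all large primes in increasing order, and stopping at the right
time, lands in any interval `[a, a + δ]`.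
-/

open Finset

section AvgOrder

variable {G H : Type*} [Group G] [Group H]

lemma avgOrder_eq_sum [Fintype G] :
    avgOrder G = (∑ x : G, (orderOf x : ℝ)) / Fintype.card G := by
  rw [avgOrder, finsum_eq_sum_of_fintype, Nat.card_eq_fintype_card]

lemma avgOrder_congr (e : G ≃* H) : avgOrder G = avgOrder H := by
  simp only [avgOrder, Nat.card_congr e.toEquiv, ← finsum_comp_equiv e.toEquiv]
  simp [MulEquiv.orderOf_eq]

lemma avgOrder_of_subsingleton [Subsingleton G] : avgOrder G = 1 := by
  have : Unique G := uniqueOfSubsingleton 1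
  simp [avgOrder, finsum_unique, Subsingleton.elim default (1 : G)]

lemma orderOf_prod_of_coprime (a : G) (b : H) (h : (orderOf a).Coprime (orderOf b)) :
    orderOf (a, b) = orderOf a * orderOf b := by
  rw [Prod.orderOf, h.lcm_eq_mul]

lemma avgOrder_prod_of_coprime [Finite G] [Finite H] (h : (Nat.card G).Coprime (Nat.card H)) :
    avgOrder (G × H) = avgOrder G * avgOrder H := by
  have := Fintype.ofFinite G
  have := Fintype.ofFinite H
  have hord (x : G × H) : (orderOf x : ℝ) = orderOf x.1 * orderOf x.2 := by
    rw [orderOf_prod_of_coprime x.1 x.2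
      (h.of_dvd (orderOf_dvd_natCard x.1) (orderOf_dvd_natCard x.2)), Nat.cast_mul]
  simp only [avgOrder_eq_sum, Fintype.sum_congr _ _ hord, Fintype.sum_prod_type,
    ← Finset.sum_mul_sum, Fintype.card_prod, Nat.cast_mul, div_mul_div_comm]

lemma avgOrder_prod_div_avgOrder_prod [Finite G] [Finite H]
    (h : (Nat.card G).Coprime (Nat.card H)) (K : Subgroup G) (L : Subgroup H) :
    avgOrder (G × H) / avgOrder (K.prod L) =
      avgOrder G / avgOrder K * (avgOrder H / avgOrder L) := by
  have hKL : (Nat.card K).Coprime (Nat.card L) :=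
    h.of_dvd K.card_subgroup_dvd_card L.card_subgroup_dvd_card
  rw [avgOrder_congr (K.prodEquiv L), avgOrder_prod_of_coprime h, avgOrder_prod_of_coprime hKL,
    mul_div_mul_comm]

end AvgOrder

section PrimeSqExponent

variable {G : Type*} [Group G] {p : ℕ}

lemma orderOf_eq_prime_sq_iff (hp : p.Prime) {x : G} (hx : x ^ p ^ 2 = 1) :
    orderOf x = p ^ 2 ↔ x ^ p ≠ 1 := by
  have := Fact.mk hp
  refine ⟨fun h hx' => ?_, fun h => orderOf_eq_prime_pow (by simpa using h) hx⟩
  have := orderOf_le_of_pow_eq_one hp.pos hx'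
  rw [h] at this
  nlinarith [hp.two_le]

lemma orderOf_eq_of_pow_prime_sq_eq_one (hp : p.Prime) {x : G} (hx : x ^ p ^ 2 = 1) :
    (orderOf x : ℝ) = p - (p - 1) * (if orderOf x = 1 then 1 else 0) +
      (p ^ 2 - p) * (if orderOf x = p ^ 2 then 1 else 0) := by
  obtain ⟨k, hk, hxk⟩ := (Nat.dvd_prime_pow hp).1 (orderOf_dvd_of_pow_eq_one hx)
  have hp1 : p ≠ 1 := hp.one_lt.ne'
  have hp2 : p ≠ p ^ 2 := by nlinarith [hp.two_le]
  have h1p2 : 1 ≠ p ^ 2 := (Nat.one_lt_pow two_ne_zero hp.one_lt).ne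
  interval_cases k <;> simp [hxk, hp1, hp2, h1p2]

lemma avgOrder_eq_of_pow_prime_sq_eq_one [Fintype G] (hp : p.Prime) (h : ∀ x : G, x ^ p ^ 2 = 1) :
    avgOrder G = (p * Fintype.card G - (p - 1) + (p ^ 2 - p) * #{x : G | orderOf x = p ^ 2}) /
      Fintype.card G := by
  classical
  rw [avgOrder_eq_sum, Fintype.sum_congr _ _ fun x => orderOf_eq_of_pow_prime_sq_eq_one hp (h x)]
  have hone : #{x : G | orderOf x = 1} = 1 := Finset.card_eq_one.2 ⟨1, by ext; simp⟩
  simp only [Finset.sum_add_distrib, Finset.sum_sub_distrib, ← Finset.mul_sum, Finset.sum_boole,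
    Finset.sum_const, Finset.card_univ, nsmul_eq_mul, hone, Nat.cast_one]
  ring

lemma avgOrder_of_isCyclic_of_card_eq_prime_sq [Finite G] [IsCyclic G] (hp : p.Prime)
    (hG : Nat.card G = p ^ 2) : avgOrder G = p - (p - 1) / p ^ 2 + (p - 1) ^ 2 := by
  have := Fintype.ofFinite G
  rw [Nat.card_eq_fintype_card] at hG
  have hcount : #{x : G | orderOf x = p ^ 2} = p * (p - 1) := by
    rw [IsCyclic.card_orderOf_eq_totient hG.symm.dvd, Nat.totient_prime_pow_succ hp]
    ring
  rw [avgOrder_eq_of_pow_prime_sq_eq_one hp fun x => hG ▸ pow_card_eq_one, hcount, hG]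
  have : (p : ℝ) ≠ 0 := by exact_mod_cast hp.ne_zero
  push_cast [hp.one_le]
  field_simp

end PrimeSqExponent

lemma ZMod.sum_range_natCast {M : Type*} [AddCommMonoid M] (n : ℕ) [NeZero n] (f : ZMod n → M) :
    ∑ i ∈ range n, f i = ∑ x, f x := by
  refine Finset.sum_nbij' (fun i => (i : ZMod n)) ZMod.val ?_ ?_ ?_ ?_ ?_ <;> intros <;>
    simp_all [ZMod.val_lt, Nat.mod_eq_of_lt]

lemma ZMod.card_filter_sum_eq_zero {ι : Type*} [Fintype ι] [DecidableEq ι] [Nonempty ι]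
    (n : ℕ) [NeZero n] : #{v : ι → ZMod n | ∑ i, v i = 0} = n ^ (Fintype.card ι - 1) := by
  let f : (ι → ZMod n) →+ ZMod n := AddMonoidHom.mk' (fun v => ∑ i, v i) fun _ _ => sum_add_distrib
  have hf : Function.Surjective f := fun c => ⟨Pi.single (Classical.arbitrary ι) c, by simp [f]⟩
  have hker := f.ker.card_mul_index
  rw [AddSubgroup.index_ker, AddMonoidHom.range_eq_top.2 hf, AddSubgroup.card_top, Nat.card_fun,
    Nat.card_zmod, Nat.card_eq_fintype_card (α := ι),
    ← pow_sub_one_mul Fintype.card_ne_zero] at hker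
  rw [← Fintype.card_subtype, ← Nat.card_eq_fintype_card]
  exact Nat.eq_of_mul_eq_mul_right (NeZero.pos n) hker

section Wreath

variable (p : ℕ)

def shiftAut : Multiplicative (ZMod p) →* MulAut (Multiplicative (ZMod p → ZMod p)) where
  toFun c := AddEquiv.toMultiplicative
    { toFun := fun v z => v (z + c.toAdd)
      invFun := fun v z => v (z - c.toAdd)
      left_inv := fun v => by simp
      right_inv := fun v => by simp
      map_add' := fun _ _ => rfl }
  map_one' := by ext; simp
  map_mul' _ _ := by ext; simp [add_assoc]

/-- The regular wreath product `C_p ≀ C_p`. -/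
abbrev Wreath := Multiplicative (ZMod p → ZMod p) ⋊[shiftAut p] Multiplicative (ZMod p)

instance [NeZero p] : Fintype (Wreath p) := Fintype.ofEquiv _ SemidirectProduct.equivProd.symm

variable {p}

lemma Wreath.card [NeZero p] : Nat.card (Wreath p) = p ^ (p + 1) := by
  rw [SemidirectProduct.card, Nat.card_congr Multiplicative.toAdd,
    Nat.card_congr Multiplicative.toAdd, Nat.card_fun, Nat.card_zmod, pow_succ]

lemma Wreath.toAdd_pow_left (x : Wreath p) (n : ℕ) (z : ZMod p) :
    (x ^ n).left.toAdd z = ∑ i ∈ range n, x.left.toAdd (z + i • x.right.toAdd) := by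
  induction n with
  | zero => rfl
  | succ n ih =>
    have hright : (x ^ n).right = x.right ^ n := map_pow SemidirectProduct.rightHom x n
    rw [pow_succ, SemidirectProduct.mul_left, toAdd_mul, Pi.add_apply, ih, sum_range_succ, hright]
    rfl

lemma Wreath.right_pow_self (x : Wreath p) : (x ^ p).right = 1 := by
  rw [← SemidirectProduct.rightHom_eq_right, map_pow]
  apply Multiplicative.toAdd.injective
  simp

lemma Wreath.pow_self_eq_one_of_right_eq_one {x : Wreath p} (hx : x.right = 1) : x ^ p = 1 := by
  refine SemidirectProduct.ext ?_ (Wreath.right_pow_self x)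
  apply Multiplicative.toAdd.injective
  funext z
  simp [Wreath.toAdd_pow_left, hx]

lemma Wreath.pow_sq_eq_one (x : Wreath p) : x ^ p ^ 2 = 1 := by
  rw [sq, pow_mul]
  exact Wreath.pow_self_eq_one_of_right_eq_one (Wreath.right_pow_self x)

variable [Fact p.Prime]

lemma Wreath.toAdd_pow_self_left {x : Wreath p} (hx : x.right ≠ 1) (z : ZMod p) :
    (x ^ p).left.toAdd z = ∑ y, x.left.toAdd y := by
  have hc : x.right.toAdd ≠ 0 := hx
  simp_rw [Wreath.toAdd_pow_left, nsmul_eq_mul]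
  rw [ZMod.sum_range_natCast p fun y => x.left.toAdd (z + y * x.right.toAdd)]
  exact Fintype.sum_equiv ((Equiv.mulRight₀ _ hc).trans (Equiv.addLeft z)) _ _ fun _ => rfl

lemma Wreath.pow_self_eq_one_iff (x : Wreath p) :
    x ^ p = 1 ↔ x.right = 1 ∨ ∑ y, x.left.toAdd y = 0 := by
  by_cases hx : x.right = 1
  · simp [hx, Wreath.pow_self_eq_one_of_right_eq_one]
  · simp only [hx, false_or, SemidirectProduct.ext_iff, Wreath.right_pow_self,
      SemidirectProduct.one_left, SemidirectProduct.one_right, and_true]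
    rw [← Multiplicative.toAdd.injective.eq_iff, funext_iff]
    simp [Wreath.toAdd_pow_self_left hx]

lemma Wreath.card_orderOf_eq_sq :
    #{x : Wreath p | orderOf x = p ^ 2} = (p - 1) * (p ^ p - p ^ (p - 1)) := by
  have hsum : #{v : ZMod p → ZMod p | ∑ z, v z ≠ 0} = p ^ p - p ^ (p - 1) := by
    rw [Finset.filter_not, Finset.card_sdiff_of_subset (Finset.filter_subset _ _),
      ZMod.card_filter_sum_eq_zero, Finset.card_univ, Fintype.card_fun, ZMod.card]
  have hc : #{c : ZMod p | c ≠ 0} = p - 1 := by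
    rw [Finset.filter_ne', Finset.card_erase_of_mem (Finset.mem_univ _), Finset.card_univ,
      ZMod.card]
  rw [mul_comm, ← hsum, ← hc, ← Finset.card_product]
  refine Finset.card_equiv
    (SemidirectProduct.equivProd.trans (Multiplicative.toAdd.prodCongr Multiplicative.toAdd))
    fun x => ?_
  simp only [mem_filter, mem_univ, orderOf_eq_prime_sq_iff Fact.out (Wreath.pow_sq_eq_one x),
    Wreath.pow_self_eq_one_iff, not_or, true_and, SemidirectProduct.equivProd, Equiv.trans_apply,
    Equiv.coe_fn_mk, Equiv.prodCongr_apply, Prod.map_apply, mem_product, ne_eq, toAdd_eq_zero]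
  exact and_comm

lemma avgOrder_wreath : avgOrder (Wreath p) = p - (p - 1) / p ^ (p + 1) + (p - 1) ^ 3 / p := by
  have hp : p.Prime := Fact.out
  rw [avgOrder_eq_of_pow_prime_sq_eq_one hp Wreath.pow_sq_eq_one, Wreath.card_orderOf_eq_sq,
    ← Nat.card_eq_fintype_card, Wreath.card]
  have : (p : ℝ) ≠ 0 := by exact_mod_cast hp.ne_zero
  push_cast [hp.one_le, Nat.pow_le_pow_right hp.pos (Nat.sub_le p 1)]
  have hpow : (p : ℝ) ^ p = p ^ (p - 1) * p := (pow_sub_one_mul hp.ne_zero _).symm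
  rw [pow_succ, hpow]
  field_simp

lemma Wreath.exists_orderOf_eq_sq : ∃ g : Wreath p, orderOf g = p ^ 2 := by
  refine ⟨⟨.ofAdd (Pi.single 0 1), .ofAdd 1⟩, ?_⟩
  rw [orderOf_eq_prime_sq_iff Fact.out (Wreath.pow_sq_eq_one _), Ne, Wreath.pow_self_eq_one_iff]
  simp

end Wreath

/-- `o(C_p ≀ C_p) / o(C_{p²})`, by `avgOrder_wreath` and
`avgOrder_of_isCyclic_of_card_eq_prime_sq`. -/
noncomputable def wreathRatio (p : ℕ) : ℝ :=
  (p - (p - 1) / p ^ (p + 1) + (p - 1) ^ 3 / p) / (p - (p - 1) / p ^ 2 + (p - 1) ^ 2)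

lemma exists_subgroup_avgOrder_wreath_div_eq (p : ℕ) [Fact p.Prime] :
    ∃ H : Subgroup (Wreath p), avgOrder (Wreath p) / avgOrder H = wreathRatio p := by
  obtain ⟨g, hg⟩ := Wreath.exists_orderOf_eq_sq (p := p)
  refine ⟨Subgroup.zpowers g, ?_⟩
  rw [avgOrder_wreath,
    avgOrder_of_isCyclic_of_card_eq_prime_sq Fact.out (by rw [Nat.card_zpowers, hg]), wreathRatio]

lemma sub_one_div_pow_mem_Icc {x : ℝ} (hx : 1 ≤ x) {n : ℕ} (hn : n ≠ 0) :
    (x - 1) / x ^ n ∈ Set.Icc 0 1 :=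
  ⟨div_nonneg (by linarith) (by positivity),
    div_le_one_of_le₀ ((sub_le_self x zero_le_one).trans (le_self_pow₀ hx hn)) (by positivity)⟩

lemma one_sub_three_div_le_wreathRatio {p : ℕ} (hp : 5 ≤ p) : 1 - 3 / p ≤ wreathRatio p := by
  have hP : (5 : ℝ) ≤ p := by exact_mod_cast hp
  obtain ⟨he₁, he₁'⟩ := sub_one_div_pow_mem_Icc (x := p) (by linarith) (n := p + 1) (by omega)
  obtain ⟨he₂, he₂'⟩ := sub_one_div_pow_mem_Icc (x := p) (by linarith) (n := 2) (by omega)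
  rw [wreathRatio]
  generalize ((p : ℝ) - 1) / p ^ (p + 1) = e₁ at *
  generalize ((p : ℝ) - 1) / p ^ 2 = e₂ at *
  generalize (p : ℝ) = P at *
  have hP0 : P ≠ 0 := by positivity
  rw [le_div_iff₀ (by nlinarith),
    show (1 - 3 / P) * (P - e₂ + (P - 1) ^ 2) = (P - 3) * (P - e₂ + (P - 1) ^ 2) / P by field_simp,
    show P - e₁ + (P - 1) ^ 3 / P = (P * (P - e₁) + (P - 1) ^ 3) / P by field_simp,
    div_le_div_iff_of_pos_right (by positivity)]
  nlinarith

lemma wreathRatio_le_one_sub_inv {p : ℕ} (hp : 5 ≤ p) : wreathRatio p ≤ 1 - 1 / (2 * p) := by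
  have hP : (5 : ℝ) ≤ p := by exact_mod_cast hp
  obtain ⟨he₁, he₁'⟩ := sub_one_div_pow_mem_Icc (x := p) (by linarith) (n := p + 1) (by omega)
  obtain ⟨he₂, he₂'⟩ := sub_one_div_pow_mem_Icc (x := p) (by linarith) (n := 2) (by omega)
  rw [wreathRatio]
  generalize ((p : ℝ) - 1) / p ^ (p + 1) = e₁ at *
  generalize ((p : ℝ) - 1) / p ^ 2 = e₂ at *
  generalize (p : ℝ) = P at *
  have hP0 : P ≠ 0 := by positivity
  rw [div_le_iff₀ (by nlinarith),
    show (1 - 1 / (2 * P)) * (P - e₂ + (P - 1) ^ 2) =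
      (2 * P - 1) * (P - e₂ + (P - 1) ^ 2) / (2 * P) by field_simp,
    show P - e₁ + (P - 1) ^ 3 / P = (2 * P * (P - e₁) + 2 * (P - 1) ^ 3) / (2 * P) by field_simp,
    div_le_div_iff_of_pos_right (by positivity)]
  nlinarith
lemma exists_nilpotent_avgOrder_div_eq_prod_wreathRatio (S : Finset ℕ) (hS : ∀ q ∈ S, q.Prime) :
    ∃ (G : Type) (_ : Group G) (_ : Finite G), Group.IsNilpotent G ∧
      Nat.card G = ∏ q ∈ S, q ^ (q + 1) ∧
      ∃ H : Subgroup G, avgOrder G / avgOrder H = ∏ q ∈ S, wreathRatio q := by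
  induction S using Finset.induction_on with
  | empty =>
    exact ⟨PUnit, inferInstance, inferInstance, inferInstance, by simp, ⊤,
      by simp [avgOrder_of_subsingleton]⟩
  | insert q S hqS ih =>
    obtain ⟨G, _, _, hG, hcard, H, hH⟩ := ih fun r hr => hS r (mem_insert_of_mem hr)
    have hq := hS q (mem_insert_self q S)
    have := Fact.mk hq
    obtain ⟨K, hK⟩ := exists_subgroup_avgOrder_wreath_div_eq q
    have hcop : (Nat.card (Wreath q)).Coprime (Nat.card G) := by
      rw [Wreath.card, hcard]
      refine Nat.Coprime.pow_left _ (Nat.Coprime.prod_right fun r hr => Nat.Coprime.pow_right _ ?_)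
      exact (Nat.coprime_primes hq (hS r (mem_insert_of_mem hr))).2
        (ne_of_mem_of_not_mem hr hqS).symm
    have : Group.IsNilpotent (Wreath q) := (IsPGroup.of_card Wreath.card).isNilpotent
    refine ⟨Wreath q × G, inferInstance, inferInstance, inferInstance, ?_, K.prod H, ?_⟩
    · rw [Nat.card_prod, Wreath.card, hcard, prod_insert hqS]
    · rw [avgOrder_prod_div_avgOrder_prod hcop, hK, hH, prod_insert hqS]

lemma exists_prod_range_mem_Icc {r : ℕ → ℝ} {t δ : ℝ} (ht : t ≤ 1) (hr : ∀ n, 0 ≤ r n)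
    (hstep : ∀ n, t ≤ r n * (t + δ)) (hsmall : ∃ N, ∏ n ∈ range N, r n ≤ t + δ) :
    ∃ N, ∏ n ∈ range N, r n ∈ Set.Icc t (t + δ) := by
  classical
  refine ⟨Nat.find hsmall, ?_, Nat.find_spec hsmall⟩
  rcases hN : Nat.find hsmall with _ | M
  · simpa using ht
  · have hM : t + δ < ∏ n ∈ range M, r n := not_le.1 (Nat.find_min hsmall (by omega))
    calc t ≤ r M * (t + δ) := hstep M
      _ ≤ r M * ∏ n ∈ range M, r n := mul_le_mul_of_nonneg_left hM.le (hr M)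
      _ = ∏ n ∈ range (M + 1), r n := by rw [prod_range_succ, mul_comm]

lemma exists_prod_range_lt_of_not_summable {r x : ℕ → ℝ} (hr : ∀ n, 0 ≤ r n)
    (hrx : ∀ n, r n ≤ 1 - x n) (hx : ∀ n, 0 ≤ x n) (hsum : ¬ Summable x) {c : ℝ} (hc : 0 < c) :
    ∃ N, ∏ n ∈ range N, r n < c := by
  have htend := Real.tendsto_exp_neg_atTop_nhds_zero.comp
    ((not_summable_iff_tendsto_nat_atTop_of_nonneg hx).1 hsum)
  obtain ⟨N, hN⟩ := (htend.eventually (gt_mem_nhds hc)).exists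
  refine ⟨N, lt_of_le_of_lt ?_ hN⟩
  rw [Function.comp_apply, ← sum_neg_distrib, Real.exp_sum]
  exact prod_le_prod (fun n _ => hr n) fun n _ =>
    (hrx n).trans (by linarith [Real.add_one_le_exp (-x n)])

lemma not_summable_indicator_primes_ge (p₀ : ℕ) :
    ¬ Summable ({n | n.Prime ∧ p₀ ≤ n}.indicator fun n : ℕ => 1 / (2 * n : ℝ)) := by
  intro h
  apply not_summable_one_div_on_primes
  rw [← summable_nat_add_iff p₀]
  refine (((summable_nat_add_iff p₀).2 h).mul_left 2).congr fun n => ?_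
  by_cases hn : (n + p₀).Prime
  · simp only [Set.indicator_apply, Set.mem_ofPred_eq, hn, Nat.le_add_left, and_self, if_true]
    field_simp
  · simp [hn]

lemma wreathRatio_nonneg {p : ℕ} (hp : 5 ≤ p) : 0 ≤ wreathRatio p := by
  have h5 : (5 : ℝ) ≤ p := by exact_mod_cast hp
  have : 0 ≤ 1 - 3 / (p : ℝ) := by rw [sub_nonneg, div_le_one₀ (by linarith)]; linarith
  exact this.trans (one_sub_three_div_le_wreathRatio hp)

lemma le_wreathRatio_mul {a δ : ℝ} (ha : 0 ≤ a) (hδ : 0 < δ) {p : ℕ} (hp : 5 ≤ p)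
    (hpδ : 3 * (a + δ) / δ ≤ p) : a ≤ wreathRatio p * (a + δ) := by
  have hp0 : (0 : ℝ) < p := by exact_mod_cast (by omega : 0 < p)
  have h3 : 3 * (a + δ) / p ≤ δ := by
    rw [div_le_iff₀ hp0]
    rw [div_le_iff₀ hδ] at hpδ
    linarith
  calc a ≤ (1 - 3 / p) * (a + δ) := by
        linarith [show (1 - 3 / (p : ℝ)) * (a + δ) = a + δ - 3 * (a + δ) / p by ring]
    _ ≤ wreathRatio p * (a + δ) :=
        mul_le_mul_of_nonneg_right (one_sub_three_div_le_wreathRatio hp) (by linarith)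

lemma exists_primes_prod_wreathRatio_mem_Icc {a δ : ℝ} (ha₀ : 0 ≤ a) (ha₁ : a ≤ 1) (hδ : 0 < δ) :
    ∃ S : Finset ℕ, (∀ q ∈ S, q.Prime) ∧ ∏ q ∈ S, wreathRatio q ∈ Set.Icc a (a + δ) := by
  classical
  obtain ⟨p₀, hp₀⟩ := exists_nat_ge (max 5 (3 * (a + δ) / δ))
  set P : ℕ → Prop := fun n => n.Prime ∧ p₀ ≤ n
  have hP (n : ℕ) (hn : P n) : 5 ≤ n ∧ 3 * (a + δ) / δ ≤ n := by
    obtain ⟨h5, hδn⟩ := max_le_iff.1 (hp₀.trans (Nat.cast_le.2 hn.2))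
    exact ⟨by exact_mod_cast h5, hδn⟩
  let r n := if P n then wreathRatio n else 1
  have hr (n : ℕ) : 0 ≤ r n := by
    by_cases hn : P n
    · simpa [r, hn] using wreathRatio_nonneg (hP n hn).1
    · simp [r, hn]
  have hstep (n : ℕ) : a ≤ r n * (a + δ) := by
    by_cases hn : P n
    · simpa [r, hn] using le_wreathRatio_mul ha₀ hδ (hP n hn).1 (hP n hn).2
    · simpa [r, hn] using (by linarith : a ≤ a + δ)
  have hrx (n : ℕ) : r n ≤ 1 - {n | P n}.indicator (fun n : ℕ => 1 / (2 * n : ℝ)) n := by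
    by_cases hn : P n
    · simpa [r, hn] using wreathRatio_le_one_sub_inv (hP n hn).1
    · simp [r, hn]
  obtain ⟨N, hN⟩ := exists_prod_range_lt_of_not_summable hr hrx
    (fun n => Set.indicator_nonneg (fun n _ => by positivity) n)
    (not_summable_indicator_primes_ge p₀) (c := a + δ) (by linarith)
  obtain ⟨N, hN⟩ := exists_prod_range_mem_Icc ha₁ hr hstep ⟨N, hN.le⟩
  exact ⟨(range N).filter P, fun q hq => (mem_filter.1 hq).2.1, by rwa [prod_filter]⟩

/-- Every `a ∈ [0, 1)` is an adherent point of the set of ratios `o(G)/o(H)`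
with `G` finite nilpotent and `H ≤ G`. -/
theorem avgOrder_ratio_nilpotent_adherent_lt_one :
    ∀ a : ℝ, 0 ≤ a → a < 1 → ∀ ε : ℝ, 0 < ε →
      ∃ (G : Type) (_ : Group G), Finite G ∧ Group.IsNilpotent G ∧
        ∃ H : Subgroup G, |avgOrder G / avgOrder H - a| < ε := by
  intro a ha₀ ha₁ ε hε
  obtain ⟨S, hS, hmem⟩ := exists_primes_prod_wreathRatio_mem_Icc ha₀ ha₁.le (half_pos hε)
  obtain ⟨G, _, _, hG, -, H, hH⟩ := exists_nilpotent_avgOrder_div_eq_prod_wreathRatio S hS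
  refine ⟨G, _, ‹_›, hG, H, ?_⟩
  rw [hH, abs_lt]
  constructor <;> linarith [hmem.1, hmem.2]
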